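/- Let L : I × I' → ℝ≥0 be TP₂ and let a₀ < a₁ < ⋯ < a_r be points of I. Define L^𝐚(x,y) = L(x,y) for x ∉ [a₀,a_r] and, for x ∈ [a_{i−1},a_i], L^𝐚(x,y) = ((a_i−x)/(a_i−a_{i−1}))·L(a_{i−1},y) + ((x−a_{i−1})/(a_i−a_{i−1}))·L(a_i,y). Then L^𝐚 is TP₂ on I × I'. -/
import Mathlib


open MeasureTheory Set Filter

/-- `L` is totally positive of order 2 on `I × J`. -/
def IsTP2 (I J : Set ℝ) (L : ℝ → ℝ → ℝ) : Prop :=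
  ∀ x₁ ∈ I, ∀ x₂ ∈ I, ∀ y₁ ∈ J, ∀ y₂ ∈ J,
    x₁ ≤ x₂ → y₁ ≤ y₂ → L x₁ y₂ * L x₂ y₁ ≤ L x₁ y₁ * L x₂ y₂

lemma tp2_lemA (I I' : Set ℝ) (L : ℝ → ℝ → ℝ) (hL : IsTP2 I I' L)
    (p q s t : ℝ) (hp : p ∈ I) (hq : q ∈ I) (hs : s ∈ I) (ht : t ∈ I)
    (y₁ y₂ : ℝ) (hy₁ : y₁ ∈ I') (hy₂ : y₂ ∈ I') (hy : y₁ ≤ y₂)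
    (α β γ δ : ℝ) (hα : 0 ≤ α) (hβ : 0 ≤ β) (hγ : 0 ≤ γ) (hδ : 0 ≤ δ)
    (hpq : p ≤ q) (hqs : q ≤ s) (hst : s ≤ t) :
    (α * L p y₂ + β * L q y₂) * (γ * L s y₁ + δ * L t y₁) ≤
      (α * L p y₁ + β * L q y₁) * (γ * L s y₂ + δ * L t y₂) := by
  have d1 := hL p hp s hs y₁ hy₁ y₂ hy₂ (hpq.trans hqs) hy
  have d2 := hL p hp t ht y₁ hy₁ y₂ hy₂ ((hpq.trans hqs).trans hst) hy
  have d3 := hL q hq s hs y₁ hy₁ y₂ hy₂ hqs hy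
  have d4 := hL q hq t ht y₁ hy₁ y₂ hy₂ (hqs.trans hst) hy
  nlinarith [mul_le_mul_of_nonneg_left d1 (mul_nonneg hα hγ),
    mul_le_mul_of_nonneg_left d2 (mul_nonneg hα hδ),
    mul_le_mul_of_nonneg_left d3 (mul_nonneg hβ hγ),
    mul_le_mul_of_nonneg_left d4 (mul_nonneg hβ hδ)]

lemma tp2_lemB (I I' : Set ℝ) (L : ℝ → ℝ → ℝ) (hL : IsTP2 I I' L)
    (p q : ℝ) (hp : p ∈ I) (hq : q ∈ I)
    (y₁ y₂ : ℝ) (hy₁ : y₁ ∈ I') (hy₂ : y₂ ∈ I') (hy : y₁ ≤ y₂)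
    (α β γ δ : ℝ) (hpq : p ≤ q) (hcross : β * γ ≤ α * δ) :
    (α * L p y₂ + β * L q y₂) * (γ * L p y₁ + δ * L q y₁) ≤
      (α * L p y₁ + β * L q y₁) * (γ * L p y₂ + δ * L q y₂) := by
  have d := hL p hp q hq y₁ hy₁ y₂ hy₂ hpq hy
  nlinarith [mul_nonneg (sub_nonneg.2 hcross) (sub_nonneg.2 d)]

theorem stmt2 (I I' : Set ℝ) (hI : I.OrdConnected) (hI' : I'.OrdConnected)
    (L : ℝ → ℝ → ℝ)
    (hL0 : ∀ x ∈ I, ∀ y ∈ I', 0 ≤ L x y)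
    (hL : IsTP2 I I' L)
    (r : ℕ) (hr : 0 < r) (a : ℕ → ℝ)
    (haI : ∀ i ≤ r, a i ∈ I)
    (hamono : ∀ i < r, a i < a (i + 1))
    (La : ℝ → ℝ → ℝ)
    (hLa₁ : ∀ x, x ∉ Icc (a 0) (a r) → ∀ y, La x y = L x y)
    (hLa₂ : ∀ i < r, ∀ x ∈ Icc (a i) (a (i + 1)), ∀ y,
      La x y = ((a (i + 1) - x) / (a (i + 1) - a i)) * L (a i) y
        + ((x - a i) / (a (i + 1) - a i)) * L (a (i + 1)) y) :
    IsTP2 I I' La := by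
  classical
  -- monotonicity of `a` on `{0,…,r}`
  have amono : ∀ i j, i ≤ j → j ≤ r → a i ≤ a j := by
    intro i j hij hjr
    obtain ⟨d, rfl⟩ := Nat.exists_eq_add_of_le hij
    clear hij
    induction d with
    | zero => simp
    | succ d ih =>
      have h1 : a i ≤ a (i + d) := ih (by omega)
      have h2 : a (i + d) < a (i + d + 1) := hamono (i + d) (by omega)
      have : i + (d + 1) = i + d + 1 := by omega
      rw [this]; linarith
  -- canonical segment for a point of `Icc (a 0) (a r)`
  have seg : ∀ x, x ∈ Icc (a 0) (a r) →
      ∃ i, i < r ∧ a i ≤ x ∧ x ≤ a (i + 1) ∧ ∀ k, x ≤ a (k + 1) → i ≤ k := by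
    intro x hx
    haveI : DecidablePred fun i => x ≤ a (i + 1) := fun _ => Classical.dec _
    have hP : x ≤ a ((r - 1) + 1) := by rw [show r - 1 + 1 = r by omega]; exact hx.2
    have hex : ∃ i, x ≤ a (i + 1) := ⟨r - 1, hP⟩
    refine ⟨Nat.find hex, ?_, ?_, Nat.find_spec hex, fun k hk => Nat.find_le hk⟩
    · have : Nat.find hex ≤ r - 1 := Nat.find_le hP
      omega
    · rcases Nat.eq_zero_or_pos (Nat.find hex) with h0 | h0
      · rw [h0]; exact hx.1
      · have hm := Nat.find_min hex (m := Nat.find hex - 1) (by omega)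
        rw [show Nat.find hex - 1 + 1 = Nat.find hex by omega] at hm
        push_neg at hm; exact hm.le
  intro x₁ hx₁I x₂ hx₂I y₁ hy₁ y₂ hy₂ hx hy
  by_cases h₁ : x₁ ∈ Icc (a 0) (a r)
  · obtain ⟨i, hir, hai, hx1le, hmin₁⟩ := seg x₁ h₁
    have hhi : 0 < a (i + 1) - a i := by have := hamono i hir; linarith
    have hpI : a i ∈ I := haI i (by omega)
    have hqI : a (i + 1) ∈ I := haI (i + 1) (by omega)
    have hα : 0 ≤ (a (i + 1) - x₁) / (a (i + 1) - a i) :=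
      div_nonneg (by linarith) hhi.le
    have hβ : 0 ≤ (x₁ - a i) / (a (i + 1) - a i) :=
      div_nonneg (by linarith) hhi.le
    rw [hLa₂ i hir x₁ ⟨hai, hx1le⟩ y₁, hLa₂ i hir x₁ ⟨hai, hx1le⟩ y₂]
    by_cases h₂ : x₂ ∈ Icc (a 0) (a r)
    · obtain ⟨j, hjr, haj, hx2le, hmin₂⟩ := seg x₂ h₂
      have hhj : 0 < a (j + 1) - a j := by have := hamono j hjr; linarith
      have hγ : 0 ≤ (a (j + 1) - x₂) / (a (j + 1) - a j) :=
        div_nonneg (by linarith) hhj.le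
      have hδ : 0 ≤ (x₂ - a j) / (a (j + 1) - a j) :=
        div_nonneg (by linarith) hhj.le
      rw [hLa₂ j hjr x₂ ⟨haj, hx2le⟩ y₁, hLa₂ j hjr x₂ ⟨haj, hx2le⟩ y₂]
      have hij : i ≤ j := hmin₁ j (hx.trans hx2le)
      rcases eq_or_lt_of_le hij with rfl | hlt
      · -- same segment: use the cross-coefficient lemma
        refine tp2_lemB I I' L hL (a i) (a (i + 1)) hpI hqI y₁ y₂ hy₁ hy₂ hy
          _ _ _ _ (by linarith) ?_
        rw [div_mul_div_comm, div_mul_div_comm]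
        apply div_le_div_of_nonneg_right ?_ (by positivity)
        nlinarith [mul_nonneg hhi.le (sub_nonneg.2 hx)]
      · -- different segments
        have : a (i + 1) ≤ a j := amono (i + 1) j hlt hjr.le
        exact tp2_lemA I I' L hL (a i) (a (i + 1)) (a j) (a (j + 1)) hpI hqI
          (haI j (by omega)) (haI (j + 1) (by omega)) y₁ y₂ hy₁ hy₂ hy
          _ _ _ _ hα hβ hγ hδ (by linarith) this (by linarith)
    · -- x₂ outside: necessarily `a r < x₂`
      rw [mem_Icc, not_and_or, not_le, not_le] at h₂
      rcases h₂ with h₂ | h₂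
      · exfalso; have : a 0 ≤ a i := amono 0 i (by omega) (by omega); linarith
      · rw [hLa₁ x₂ (by rw [mem_Icc, not_and_or]; right; exact not_le.2 h₂) y₁,
          hLa₁ x₂ (by rw [mem_Icc, not_and_or]; right; exact not_le.2 h₂) y₂]
        have hq2 : a (i + 1) ≤ x₂ := by
          have : a (i + 1) ≤ a r := amono (i + 1) r (by omega) le_rfl; linarith
        have H := tp2_lemA I I' L hL (a i) (a (i + 1)) x₂ x₂ hpI hqI hx₂I hx₂I
          y₁ y₂ hy₁ hy₂ hy _ _ 1 0 hα hβ zero_le_one le_rfl (by linarith) hq2 le_rfl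
        simpa using H
  · rw [mem_Icc, not_and_or, not_le, not_le] at h₁
    rcases h₁ with h₁ | h₁
    · -- x₁ < a 0
      rw [hLa₁ x₁ (by rw [mem_Icc, not_and_or]; left; exact not_le.2 h₁) y₁,
        hLa₁ x₁ (by rw [mem_Icc, not_and_or]; left; exact not_le.2 h₁) y₂]
      by_cases h₂ : x₂ ∈ Icc (a 0) (a r)
      · obtain ⟨j, hjr, haj, hx2le, hmin₂⟩ := seg x₂ h₂
        have hhj : 0 < a (j + 1) - a j := by have := hamono j hjr; linarith
        have hγ : 0 ≤ (a (j + 1) - x₂) / (a (j + 1) - a j) :=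
          div_nonneg (by linarith) hhj.le
        have hδ : 0 ≤ (x₂ - a j) / (a (j + 1) - a j) :=
          div_nonneg (by linarith) hhj.le
        rw [hLa₂ j hjr x₂ ⟨haj, hx2le⟩ y₁, hLa₂ j hjr x₂ ⟨haj, hx2le⟩ y₂]
        have hq2 : x₁ ≤ a j := by
          have : a 0 ≤ a j := amono 0 j (by omega) (by omega); linarith
        have H := tp2_lemA I I' L hL x₁ x₁ (a j) (a (j + 1)) hx₁I hx₁I
          (haI j (by omega)) (haI (j + 1) (by omega)) y₁ y₂ hy₁ hy₂ hy
          1 0 _ _ zero_le_one le_rfl hγ hδ le_rfl hq2 (by linarith)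
        simpa using H
      · rw [hLa₁ x₂ h₂ y₁, hLa₁ x₂ h₂ y₂]
        exact hL x₁ hx₁I x₂ hx₂I y₁ hy₁ y₂ hy₂ hx hy
    · -- a r < x₁ : then x₂ is outside too
      have h₂ : x₂ ∉ Icc (a 0) (a r) := by
        rw [mem_Icc, not_and_or]; right; exact not_le.2 (by linarith)
      rw [hLa₁ x₁ (by rw [mem_Icc, not_and_or]; right; exact not_le.2 h₁) y₁,
        hLa₁ x₁ (by rw [mem_Icc, not_and_or]; right; exact not_le.2 h₁) y₂,
        hLa₁ x₂ h₂ y₁, hLa₁ x₂ h₂ y₂]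
      exact hL x₁ hx₁I x₂ hx₂I y₁ hy₁ y₂ hy₂ hx hy
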